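/- arXiv:1206.5371 — 9 statements merged into one kernel-verified Lean document; each statement's English description precedes it below -/
import Mathlib

section
/- If $a_1,\ldots,a_n\in\{-1,1\}$, $c_k=\sum_{j=1}^{n-k}a_ja_{j+k}$, then for each $k=0,1,\ldots,n-1$ one has $a_{k+1}a_{n-k}=(-1)^{n-k-(1+c_k+c_{k+1})/2}$. -/
/-!
Write `m_k` for the number of terms `a_j a_{j+k} = -1` in `c_k`, so that `c_k = (n - k) - 2 m_k`
and the product of these terms is `(-1)^{m_k}`. The exponent in the claim is then `m_k + m_{k+1}`,
and the product of all terms of `c_k` and `c_{k+1}` collapses to `a_{k+1} a_{n-k}`: it equals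
`(∏_{j ≤ n-k} a_j)(∏_{k < j ≤ n} a_j)(∏_{j < n-k} a_j)(∏_{k+1 < j ≤ n} a_j)`, and `a_j² = 1`.
-/

open Finset

theorem exists_sum_eq_card_sub_two_mul_and_prod_eq_neg_one_pow {ι : Type*} (s : Finset ι)
    (f : ι → ℤ) (hf : ∀ i ∈ s, f i = 1 ∨ f i = -1) :
    ∃ m : ℕ, ∑ i ∈ s, f i = #s - 2 * m ∧ ∏ i ∈ s, f i = (-1) ^ m := by
  classical
  set m := #{i ∈ s | f i = -1}
  have hneg : ∀ i ∈ {i ∈ s | f i = -1}, f i = -1 := fun i hi => (mem_filter.1 hi).2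
  have hpos : ∀ i ∈ {i ∈ s | ¬f i = -1}, f i = 1 := fun i hi =>
    (hf i (mem_filter.1 hi).1).resolve_right (mem_filter.1 hi).2
  refine ⟨m, ?_, ?_⟩
  · have hcard := card_filter_add_card_filter_not (s := s) (fun i => f i = -1)
    rw [← sum_filter_add_sum_filter_not s (fun i => f i = -1), sum_congr rfl hneg,
      sum_congr rfl hpos, sum_const, sum_const]
    simp only [nsmul_eq_mul, mul_neg, mul_one]
    omega
  · rw [← prod_filter_mul_prod_filter_not s (fun i => f i = -1), prod_congr rfl hneg,
      prod_congr rfl hpos, prod_const, prod_const_one, mul_one]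

theorem prod_Icc_mul_shift {M : Type*} [CommMonoid M] (a : ℕ → M) (N k : ℕ) :
    ∏ j ∈ Icc 1 N, a j * a (j + k) = (∏ j ∈ Icc 1 N, a j) * ∏ j ∈ Icc (1 + k) (N + k), a j := by
  rw [prod_mul_distrib, ← map_add_right_Icc, prod_map]
  rfl

theorem prod_mul_self_eq_one {ι M : Type*} [CommMonoid M] {s : Finset ι} {a : ι → M}
    (ha : ∀ i ∈ s, a i * a i = 1) : (∏ i ∈ s, a i) * ∏ i ∈ s, a i = 1 := by
  rw [← prod_mul_distrib]; exact prod_eq_one ha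

theorem prod_autocorrelation_terms_mul {M : Type*} [CommMonoid M] (a : ℕ → M) (k N : ℕ)
    (ha : ∀ j ∈ Icc 1 (k + N + 1), a j * a j = 1) :
    (∏ j ∈ Icc 1 (N + 1), a j * a (j + k)) * ∏ j ∈ Icc 1 N, a j * a (j + (k + 1)) =
      a (k + 1) * a (N + 1) := by
  set A := ∏ j ∈ Icc 1 N, a j
  set B := ∏ j ∈ Icc (k + 2) (k + N + 1), a j
  have hA : A * A = 1 := prod_mul_self_eq_one fun j hj => ha j (by rw [mem_Icc] at hj ⊢; omega)
  have hB : B * B = 1 := prod_mul_self_eq_one fun j hj => ha j (by rw [mem_Icc] at hj ⊢; omega)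
  have h₀ : ∏ j ∈ Icc 1 (N + 1), a j * a (j + k) = A * a (N + 1) * (a (k + 1) * B) := by
    rw [prod_Icc_mul_shift, prod_Icc_succ_top (by omega),
      ← insert_Icc_add_one_left_eq_Icc (by omega : 1 + k ≤ N + 1 + k), prod_insert (by simp),
      show 1 + k = k + 1 by omega, show k + 1 + 1 = k + 2 by omega,
      show N + 1 + k = k + N + 1 by omega]
  have h₁ : ∏ j ∈ Icc 1 N, a j * a (j + (k + 1)) = A * B := by
    rw [prod_Icc_mul_shift, show 1 + (k + 1) = k + 2 by omega,
      show N + (k + 1) = k + N + 1 by omega]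
  calc _ = (A * A) * (B * B) * (a (k + 1) * a (N + 1)) := by rw [h₀, h₁]; ac_rfl
    _ = _ := by rw [hA, hB, one_mul, one_mul]

theorem stmt1 (n : ℕ) (hn : 1 ≤ n) (a : ℕ → ℤ)
    (ha : ∀ j ∈ Icc 1 n, a j = 1 ∨ a j = -1)
    (c : ℕ → ℤ) (hc : ∀ k, c k = ∑ j ∈ Icc 1 (n - k), a j * a (j + k)) :
    ∀ k ≤ n - 1, a (k + 1) * a (n - k) =
      (-1 : ℤ) ^ (((n : ℤ) - (k : ℤ) - (1 + c k + c (k + 1)) / 2)).toNat := by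
  intro k hk
  obtain ⟨N, hN⟩ : ∃ N, n = k + N + 1 := ⟨n - k - 1, by omega⟩
  have hterm (l : ℕ) : ∀ j ∈ Icc 1 (n - l), a j * a (j + l) = 1 ∨ a j * a (j + l) = -1 := by
    intro j hj
    simp only [mem_Icc] at hj
    rcases ha j (mem_Icc.2 (by omega)) with h | h <;>
      rcases ha (j + l) (mem_Icc.2 (by omega)) with h' | h' <;> simp [h, h']
  obtain ⟨m₀, hc₀, hp₀⟩ := exists_sum_eq_card_sub_two_mul_and_prod_eq_neg_one_pow _ _ (hterm k)
  obtain ⟨m₁, hc₁, hp₁⟩ :=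
    exists_sum_eq_card_sub_two_mul_and_prod_eq_neg_one_pow _ _ (hterm (k + 1))
  rw [← hc, Nat.card_Icc] at hc₀ hc₁
  have hexp : ((n : ℤ) - k - (1 + c k + c (k + 1)) / 2).toNat = m₀ + m₁ := by
    rw [hc₀, hc₁]; omega
  rw [hexp, pow_add, ← hp₀, ← hp₁, show n - k = N + 1 by omega, show n - (k + 1) = N by omega]
  refine (prod_autocorrelation_terms_mul a k N fun j hj => ?_).symm
  rcases ha j (hN ▸ hj) with h | h <;> simp [h]
end

section
/- If $a_1,\ldots,a_n\in\{-1,1\}$ and $c_k=\sum_{j=1}^{n-k}a_ja_{j+k}$, then $c_k+c_{n-k}\equiv n \pmod 4$ for $k=1,\ldots,n-1$. -/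
/-!
With indices taken mod `n`, the terms of `c k` and of `c (n - k)` together are the `n` products
`b j = a j * a (j + k)`, so `c k + c (n - k) = ∑ b j` while `∏ b j = (∏ a j) ^ 2 = 1`.
If `m` of the `±1` numbers `b j` equal `-1`, their sum is `n - 2 m` and their product `(-1) ^ m`;
so `∑ b j + ∏ b j ≡ n + 1 (mod 4)`, which for `∏ b j = 1` gives `c k + c (n - k) ≡ n (mod 4)`.
-/

open Finset

theorem Finset.prod_sq_eq_one_of_eq_one_or_eq_neg_one {ι R : Type*} [CommRing R] [NoZeroDivisors R]
    {s : Finset ι} {b : ι → R} (hb : ∀ j ∈ s, b j = 1 ∨ b j = -1) : (∏ j ∈ s, b j) ^ 2 = 1 := by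
  rw [← prod_pow]
  exact prod_eq_one fun j hj => sq_eq_one_iff.mpr (hb j hj)

theorem Int.sum_add_prod_modEq_card_add_one {ι : Type*} [DecidableEq ι] (s : Finset ι) (b : ι → ℤ)
    (hb : ∀ j ∈ s, b j = 1 ∨ b j = -1) :
    ∑ j ∈ s, b j + ∏ j ∈ s, b j ≡ #s + 1 [ZMOD 4] := by
  induction s using Finset.induction_on with
  | empty => simp
  | @insert x s hx ih =>
    rw [sum_insert hx, prod_insert hx, card_insert_of_notMem hx]
    have hP := sq_eq_one_iff.mp (prod_sq_eq_one_of_eq_one_or_eq_neg_one fun j hj =>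
      hb j (mem_insert_of_mem hj))
    have ih := ih fun j hj => hb j (mem_insert_of_mem hj)
    unfold Int.ModEq at ih ⊢
    push_cast
    rcases hb x (mem_insert_self x s) with h | h <;> rcases hP with hP | hP <;>
      rw [hP] at ih <;> rw [h, hP] <;> omega

theorem Finset.prod_Icc_one_mul_prod_Icc_add_one {M : Type*} [CommMonoid M] (a : ℕ → M)
    {m n : ℕ} (h : m ≤ n) : (∏ j ∈ Icc 1 m, a j) * ∏ j ∈ Icc (m + 1) n, a j = ∏ j ∈ Icc 1 n, a j := by
  have := prod_Ioc_consecutive a (Nat.zero_le m) h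
  simpa only [← Icc_add_one_left_eq_Ioc, zero_add] using this

theorem Finset.prod_Icc_add_right_eq_prod_Icc {M : Type*} [CommMonoid M] (a : ℕ → M) {m n : ℕ}
    (h : m ≤ n) :
    ∏ j ∈ Icc 1 (n - m), a (j + m) = ∏ j ∈ Icc (m + 1) n, a j := by
  have := prod_map (Icc 1 (n - m)) (addRightEmbedding m) a
  rw [map_add_right_Icc, Nat.sub_add_cancel h, add_comm] at this
  exact this.symm

theorem Finset.prod_Icc_mul_shift_mul_prod_Icc_mul_shift {M : Type*} [CommMonoid M] (a : ℕ → M)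
    {n k : ℕ} (hk : k ≤ n) :
    (∏ j ∈ Icc 1 (n - k), a j * a (j + k)) * ∏ j ∈ Icc 1 k, a j * a (j + (n - k)) =
      (∏ j ∈ Icc 1 n, a j) ^ 2 := by
  have hshift := prod_Icc_add_right_eq_prod_Icc a (Nat.sub_le n k)
  rw [Nat.sub_sub_self hk] at hshift
  calc _ = ((∏ j ∈ Icc 1 (n - k), a j) * ∏ j ∈ Icc (n - k + 1) n, a j) *
        ((∏ j ∈ Icc 1 k, a j) * ∏ j ∈ Icc (k + 1) n, a j) := by
        rw [prod_mul_distrib, prod_mul_distrib, prod_Icc_add_right_eq_prod_Icc a hk, hshift]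
        ac_rfl
    _ = (∏ j ∈ Icc 1 n, a j) ^ 2 := by
        rw [prod_Icc_one_mul_prod_Icc_add_one a hk,
          prod_Icc_one_mul_prod_Icc_add_one a (Nat.sub_le n k), sq]

theorem stmt3_general (n : ℕ) (a : ℕ → ℤ)
    (ha : ∀ j ∈ Icc 1 n, a j = 1 ∨ a j = -1)
    (c : ℕ → ℤ) (hc : ∀ k, c k = ∑ j ∈ Icc 1 (n - k), a j * a (j + k)) :
    ∀ k, 1 ≤ k → k ≤ n - 1 → (4 : ℤ) ∣ (c k + c (n - k) - (n : ℤ)) := by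
  intro k _ hkn
  have hk : k ≤ n := by omega
  let s := (Icc 1 (n - k)).disjSum (Icc 1 k)
  let b : ℕ ⊕ ℕ → ℤ := Sum.elim (fun j => a j * a (j + k)) (fun j => a j * a (j + (n - k)))
  have hb : ∀ j ∈ s, b j = 1 ∨ b j = -1 := by
    have hmul {i j} (hi : i ∈ Icc 1 n) (hj : j ∈ Icc 1 n) : a i * a j = 1 ∨ a i * a j = -1 := by
      rcases ha i hi with h | h <;> rcases ha j hj with h' | h' <;> simp [h, h']
    rintro (j | j) hj <;> simp only [s, inl_mem_disjSum, inr_mem_disjSum, mem_Icc] at hj <;>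
      exact hmul (mem_Icc.mpr (by omega)) (mem_Icc.mpr (by omega))
  have hsum : ∑ j ∈ s, b j = c k + c (n - k) := by
    rw [sum_disjSum, hc, hc, Nat.sub_sub_self hk]
    rfl
  have hprod : ∏ j ∈ s, b j = 1 := by
    rw [prod_disjSum]
    exact (prod_Icc_mul_shift_mul_prod_Icc_mul_shift a hk).trans
      (prod_sq_eq_one_of_eq_one_or_eq_neg_one ha)
  have hcard : (#s : ℤ) = n := by
    rw [card_disjSum, Nat.card_Icc, Nat.card_Icc]
    omega
  have key := Int.sum_add_prod_modEq_card_add_one s b hb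
  rw [hsum, hprod, hcard] at key
  exact (Int.ModEq.add_right_cancel' 1 key).symm.dvd

theorem stmt3 (n : ℕ) (hn : 2 ≤ n) (a : ℕ → ℤ)
    (ha : ∀ j ∈ Icc 1 n, a j = 1 ∨ a j = -1)
    (c : ℕ → ℤ) (hc : ∀ k, c k = ∑ j ∈ Icc 1 (n - k), a j * a (j + k)) :
    ∀ k, 1 ≤ k → k ≤ n - 1 → (4 : ℤ) ∣ (c k + c (n - k) - (n : ℤ)) :=
  stmt3_general n a ha c hc
end

section
/- Let $n=2m+1$ and $a_1,\ldots,a_n\in\{-1,1\}$ with autocorrelations $c_k=\sum_{j=1}^{n-k}a_ja_{j+k}$. Suppose $|c_k|\le 1$ for all even $k$ with $2\le k\le 2m$, and $4\mid c_k$ for all odd $k$ with $1\le k\le 2m-1$. Then $c_{2j}=(-1)^m$ for $j=1,\ldots,m$. -/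
/-!
For `a, b ∈ {±1}` we have `(a - 1)(b - 1) ≡ 0 (mod 4)`, i.e. `ab ≡ a + b - 1`. Summing this over
the products in `c_k` and `c_{n-k}` gives `c_k + c_{n-k} ≡ 2S - n (mod 4)` with `S = ∑ aᵢ`, and
`2S ≡ 2n (mod 4)` because every `aᵢ` is odd; so `c_k + c_{n-k} ≡ n (mod 4)`. For `k = 2j` the
index `n - k` is odd, hence `4 ∣ c_{n-k}` and `c_{2j} ≡ 2m + 1 (mod 4)`, which together with
`|c_{2j}| ≤ 1` forces `c_{2j} = (-1)^m`.
-/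

open Finset

theorem Int.mul_modEq_add_sub_one {a b : ℤ} (ha : a = 1 ∨ a = -1) (hb : b = 1 ∨ b = -1) :
    a * b ≡ a + b - 1 [ZMOD 4] := by
  rcases ha with rfl | rfl <;> rcases hb with rfl | rfl <;> decide

def autocorr (a : ℕ → ℤ) (n k : ℕ) : ℤ :=
  ∑ j ∈ Icc 1 (n - k), a j * a (j + k)

lemma Nat.Icc_one_eq_Ioc_zero (N : ℕ) : Icc 1 N = Ioc 0 N := rfl

lemma sum_Icc_one_add_right {M : Type*} [AddCommMonoid M] (f : ℕ → M) (N t : ℕ) :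
    ∑ i ∈ Icc 1 N, f (i + t) = ∑ i ∈ Ioc t (N + t), f i := by
  have hmap := map_add_right_Ioc 0 N t
  rw [zero_add] at hmap
  rw [Nat.Icc_one_eq_Ioc_zero, ← hmap, sum_map]
  rfl

section
variable {a : ℕ → ℤ} {n : ℕ}

lemma autocorr_modEq_sum_add_sum (ha : ∀ j ∈ Icc 1 n, a j = 1 ∨ a j = -1) {t N : ℕ}
    (h : N + t = n) :
    autocorr a n t ≡ ∑ i ∈ Ioc 0 N, a i + ∑ i ∈ Ioc t n, a i - N [ZMOD 4] := by
  have hN : n - t = N := by omega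
  calc autocorr a n t = ∑ i ∈ Icc 1 N, a i * a (i + t) := by rw [autocorr, hN]
    _ ≡ ∑ i ∈ Icc 1 N, (a i + a (i + t) - 1) [ZMOD 4] := by
      refine Int.ModEq.sum fun i hi => Int.mul_modEq_add_sub_one (ha i ?_) (ha (i + t) ?_) <;>
        simp only [mem_Icc] at hi ⊢ <;> omega
    _ = ∑ i ∈ Ioc 0 N, a i + ∑ i ∈ Ioc t n, a i - N := by
      rw [sum_sub_distrib, sum_add_distrib, sum_Icc_one_add_right, h, Nat.Icc_one_eq_Ioc_zero]
      simp

lemma two_mul_sum_modEq (ha : ∀ j ∈ Icc 1 n, a j = 1 ∨ a j = -1) :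
    2 * ∑ i ∈ Ioc 0 n, a i ≡ 2 * n [ZMOD 4] := by
  rw [mul_sum]
  calc ∑ i ∈ Ioc 0 n, 2 * a i ≡ ∑ i ∈ Ioc 0 n, 2 [ZMOD 4] :=
        Int.ModEq.sum fun i hi => by rcases ha i hi with h | h <;> rw [h] <;> decide
    _ = 2 * n := by simp [mul_comm]

theorem autocorr_add_autocorr_sub_modEq (ha : ∀ j ∈ Icc 1 n, a j = 1 ∨ a j = -1) {k : ℕ}
    (hk : k ≤ n) : autocorr a n k + autocorr a n (n - k) ≡ n [ZMOD 4] := by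
  have h₁ := autocorr_modEq_sum_add_sum ha (t := k) (N := n - k) (by omega)
  have h₂ := autocorr_modEq_sum_add_sum ha (t := n - k) (N := k) (by omega)
  have hS := two_mul_sum_modEq ha
  calc autocorr a n k + autocorr a n (n - k)
      ≡ (∑ i ∈ Ioc 0 (n - k), a i + ∑ i ∈ Ioc k n, a i - ↑(n - k))
        + (∑ i ∈ Ioc 0 k, a i + ∑ i ∈ Ioc (n - k) n, a i - k) [ZMOD 4] := h₁.add h₂
    _ = 2 * ∑ i ∈ Ioc 0 n, a i - n := by
      have hsplit₁ := sum_Ioc_consecutive a (Nat.zero_le k) hk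
      have hsplit₂ := sum_Ioc_consecutive a (Nat.zero_le (n - k)) (Nat.sub_le n k)
      rw [Nat.cast_sub hk]
      linear_combination hsplit₁ + hsplit₂
    _ ≡ 2 * n - n [ZMOD 4] := hS.sub_right _
    _ = n := by ring
end

lemma eq_neg_one_pow_of_modEq {x : ℤ} {m : ℕ} (hx : |x| ≤ 1) (h : x ≡ 2 * m + 1 [ZMOD 4]) :
    x = (-1) ^ m := by
  rw [abs_le] at hx
  rw [Int.ModEq] at h
  rcases Nat.even_or_odd m with hm | hm <;> rw [hm.neg_one_pow] <;> obtain ⟨p, rfl⟩ := hm <;>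
    push_cast at h <;> omega

theorem stmt4_general (m n : ℕ) (hn : n = 2 * m + 1) (a : ℕ → ℤ)
    (ha : ∀ j ∈ Icc 1 n, a j = 1 ∨ a j = -1)
    (c : ℕ → ℤ) (hc : ∀ k, c k = ∑ j ∈ Icc 1 (n - k), a j * a (j + k))
    (heven : ∀ k, 2 ≤ k → k ≤ 2 * m → Even k → |c k| ≤ 1)
    (hodd : ∀ k, 1 ≤ k → k ≤ 2 * m - 1 → Odd k → (4 : ℤ) ∣ c k) :
    ∀ j, 1 ≤ j → j ≤ m → c (2 * j) = (-1 : ℤ) ^ m := by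
  intro j hj hjm
  have hc' : c = autocorr a n := funext hc
  have hcomplement : c (n - 2 * j) ≡ 0 [ZMOD 4] :=
    Int.modEq_zero_iff_dvd.mpr (hodd _ (by omega) (by omega) ⟨m - j, by omega⟩)
  have hsum : c (2 * j) + c (n - 2 * j) ≡ 2 * m + 1 [ZMOD 4] := by
    rw [hc', hn]
    exact_mod_cast autocorr_add_autocorr_sub_modEq (hn ▸ ha) (by omega)
  refine eq_neg_one_pow_of_modEq (heven _ (by omega) (by omega) (even_two_mul j)) ?_
  calc c (2 * j) = c (2 * j) + 0 := (add_zero _).symm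
    _ ≡ c (2 * j) + c (n - 2 * j) [ZMOD 4] := hcomplement.symm.add_left _
    _ ≡ 2 * m + 1 [ZMOD 4] := hsum

theorem stmt4 (m n : ℕ) (hm : 1 ≤ m) (hn : n = 2 * m + 1) (a : ℕ → ℤ)
    (ha : ∀ j ∈ Icc 1 n, a j = 1 ∨ a j = -1)
    (c : ℕ → ℤ) (hc : ∀ k, c k = ∑ j ∈ Icc 1 (n - k), a j * a (j + k))
    (heven : ∀ k, 2 ≤ k → k ≤ 2 * m → Even k → |c k| ≤ 1)
    (hodd : ∀ k, 1 ≤ k → k ≤ 2 * m - 1 → Odd k → (4 : ℤ) ∣ c k) :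
    ∀ j, 1 ≤ j → j ≤ m → c (2 * j) = (-1 : ℤ) ^ m :=
  stmt4_general m n hn a ha c hc heven hodd
end

section
/- Let $n=2m+1$ and $a_1,\ldots,a_n\in\{-1,1\}$ with $c_{2j}=(-1)^m$ for $j=1,\ldots,m$ and $4\mid c_{2j-1}$ for $j=1,\ldots,m$, where $c_k=\sum_{j=1}^{n-k}a_ja_{j+k}$. Then $a_{k+1}a_{n-k}=(-1)^{m+k}$ for $k=0,1,\ldots,n-1$. -/
open Finset

/-! For signs `x, y ∈ {±1}` one has `x * y ≡ x + y - 1 (mod 4)`. Applied termwise, it turns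
`c k - c (k + 1)` into a telescoping difference of linear sums which collapses to
`a (k + 1) + a (n - k) - 1`, so `c k - c (k + 1) ≡ a (k + 1) * a (n - k) (mod 4)`.
The hypotheses give `c k ≡ (-1) ^ m` for even `k` and `c k ≡ 0` for odd `k`, also at the ends
`c 0 = n = 2 * m + 1` and `c n = 0`; hence `a (k + 1) * a (n - k) ≡ (-1) ^ (m + k) (mod 4)`,
and two signs that are congruent mod 4 are equal. -/

theorem Int.mul_modEq_add_sub_one_s5 {x y : ℤ} (hx : IsUnit x) (hy : IsUnit y) :
    x * y ≡ x + y - 1 [ZMOD 4] := by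
  rcases Int.isUnit_iff.1 hx with rfl | rfl <;> rcases Int.isUnit_iff.1 hy with rfl | rfl <;> decide

theorem Int.eq_of_isUnit_of_modEq_four {x y : ℤ} (hx : IsUnit x) (hy : IsUnit y)
    (h : x ≡ y [ZMOD 4]) : x = y := by
  rcases Int.isUnit_iff.1 hx with rfl | rfl <;> rcases Int.isUnit_iff.1 hy with rfl | rfl <;>
    first | rfl | exact absurd h (by decide)

theorem two_mul_add_one_modEq_neg_one_pow (m : ℕ) : (2 * m + 1 : ℤ) ≡ (-1) ^ m [ZMOD 4] := by
  rcases Nat.even_or_odd m with hm | hm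
  · rw [hm.neg_one_pow, Int.ModEq]; obtain ⟨u, rfl⟩ := hm; push_cast; omega
  · rw [hm.neg_one_pow, Int.ModEq]; obtain ⟨u, rfl⟩ := hm; push_cast; omega

theorem sum_Icc_one_eq_sum_range {M : Type*} [AddCommMonoid M] (f : ℕ → M) (N : ℕ) :
    ∑ j ∈ Icc 1 N, f j = ∑ j ∈ range N, f (j + 1) := by
  rw [← Ico_add_one_right_eq_Icc, sum_Ico_eq_sum_range, add_tsub_cancel_right]
  simp only [add_comm]

theorem sum_range_succ_sub_sum_range_shift {R : Type*} [CommRing R] (f g : ℕ → R) (M : ℕ) :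
    ∑ j ∈ range (M + 1), (f j + g j - 1) - ∑ j ∈ range M, (f j + g (j + 1) - 1) =
      f M + g 0 - 1 := by
  simp only [sum_sub_distrib, sum_add_distrib, sum_range_succ f, sum_range_succ' g, sum_const,
    card_range]
  ring

def autocorrelation (a : ℕ → ℤ) (n k : ℕ) : ℤ :=
  ∑ j ∈ Icc 1 (n - k), a j * a (j + k)

section autocorrelation

variable {a : ℕ → ℤ} {n : ℕ}

theorem autocorrelation_self : autocorrelation a n n = 0 := by
  simp [autocorrelation]

theorem autocorrelation_zero (ha : ∀ j ∈ Icc 1 n, IsUnit (a j)) : autocorrelation a n 0 = n := by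
  simp only [autocorrelation, Nat.sub_zero, add_zero]
  rw [sum_congr rfl fun j hj => Int.isUnit_mul_self (ha j hj)]
  simp

theorem autocorrelation_modEq_sum (ha : ∀ j ∈ Icc 1 n, IsUnit (a j)) (k : ℕ) :
    autocorrelation a n k ≡ ∑ j ∈ range (n - k), (a (j + 1) + a (j + k + 1) - 1) [ZMOD 4] := by
  rw [autocorrelation, sum_Icc_one_eq_sum_range]
  refine Int.ModEq.sum fun j hj => ?_
  rw [Nat.add_right_comm]
  exact Int.mul_modEq_add_sub_one_s5 (ha _ (by simp at hj ⊢; omega)) (ha _ (by simp at hj ⊢; omega))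

theorem autocorrelation_sub_succ_modEq (ha : ∀ j ∈ Icc 1 n, IsUnit (a j)) {k : ℕ} (hk : k < n) :
    autocorrelation a n k - autocorrelation a n (k + 1) ≡ a (k + 1) * a (n - k) [ZMOD 4] := by
  obtain ⟨M, hM⟩ : ∃ M, n - k = M + 1 := ⟨n - k - 1, by omega⟩
  have hM' : n - (k + 1) = M := by omega
  have hshift := sum_range_succ_sub_sum_range_shift (fun j => a (j + 1)) (fun j => a (j + k + 1)) M
  simp only [Nat.add_right_comm _ 1 k, zero_add] at hshift
  refine ((autocorrelation_modEq_sum ha k).sub (autocorrelation_modEq_sum ha (k + 1))).trans ?_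
  rw [hM, hM', mul_comm]
  simp only [← add_assoc]
  rw [hshift]
  exact (Int.mul_modEq_add_sub_one_s5 (ha _ (by simp; omega)) (ha _ (by simp; omega))).symm

end autocorrelation

theorem stmt5_general (m n : ℕ) (hn : n = 2 * m + 1) (a : ℕ → ℤ)
    (ha : ∀ j ∈ Icc 1 n, a j = 1 ∨ a j = -1)
    (c : ℕ → ℤ) (hc : ∀ k, c k = ∑ j ∈ Icc 1 (n - k), a j * a (j + k))
    (heven : ∀ j, 1 ≤ j → j ≤ m → c (2 * j) = (-1 : ℤ) ^ m)
    (hodd : ∀ j, 1 ≤ j → j ≤ m → (4 : ℤ) ∣ c (2 * j - 1)) :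
    ∀ k ≤ n - 1, a (k + 1) * a (n - k) = (-1 : ℤ) ^ (m + k) := by
  replace ha : ∀ j ∈ Icc 1 n, IsUnit (a j) := fun j hj => Int.isUnit_iff.2 (ha j hj)
  obtain rfl : c = autocorrelation a n := funext hc
  have hmod : ∀ k ≤ n, autocorrelation a n k ≡ if Even k then (-1) ^ m else 0 [ZMOD 4] := by
    intro k hk
    rcases Nat.even_or_odd' k with ⟨j, rfl | rfl⟩
    · rw [if_pos (even_two_mul j)]
      rcases j.eq_zero_or_pos with rfl | hj
      · rw [mul_zero, autocorrelation_zero ha, hn]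
        exact_mod_cast two_mul_add_one_modEq_neg_one_pow m
      · simp [heven j hj (by omega), Int.ModEq.refl]
    · rw [if_neg (Nat.not_even_two_mul_add_one j), Int.modEq_zero_iff_dvd]
      rcases (show j < m ∨ j = m by omega) with hj | rfl
      · have h := hodd (j + 1) (by omega) (by omega)
        rwa [show 2 * (j + 1) - 1 = 2 * j + 1 by omega] at h
      · simp [← hn, autocorrelation_self]
  intro k hk
  have hk1 : k + 1 ∈ Icc 1 n := mem_Icc.2 ⟨by omega, by omega⟩
  have hk2 : n - k ∈ Icc 1 n := mem_Icc.2 ⟨by omega, by omega⟩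
  refine Int.eq_of_isUnit_of_modEq_four ((ha _ hk1).mul (ha _ hk2)) (isUnit_neg_one.pow _) ?_
  refine (autocorrelation_sub_succ_modEq ha (by omega)).symm.trans
    (((hmod k (by omega)).sub (hmod (k + 1) (by omega))).trans ?_)
  rcases Nat.even_or_odd k with hpar | hpar <;>
    simp [hpar, Nat.not_even_iff_odd.2, pow_add, hpar.neg_one_pow]

theorem stmt5 (m n : ℕ) (hm : 1 ≤ m) (hn : n = 2 * m + 1) (a : ℕ → ℤ)
    (ha : ∀ j ∈ Icc 1 n, a j = 1 ∨ a j = -1)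
    (c : ℕ → ℤ) (hc : ∀ k, c k = ∑ j ∈ Icc 1 (n - k), a j * a (j + k))
    (heven : ∀ j, 1 ≤ j → j ≤ m → c (2 * j) = (-1 : ℤ) ^ m)
    (hodd : ∀ j, 1 ≤ j → j ≤ m → (4 : ℤ) ∣ c (2 * j - 1)) :
    ∀ k ≤ n - 1, a (k + 1) * a (n - k) = (-1 : ℤ) ^ (m + k) :=
  stmt5_general m n hn a ha c hc heven hodd
end

section
/- Let $n=2m+1$ and $a_1,\ldots,a_n\in\{-1,1\}$ satisfy $a_{k+1}a_{n-k}=(-1)^{m+k}$ for $0\le k\le n-1$, and suppose $c_{2j}=(-1)^m$ for $j=1,\ldots,m$ where $c_k=\sum_{i=1}^{n-k}a_ia_{i+k}$. Then for each $k=0,1,\ldots,m-1$: $\sum_{i=1}^{k}(-1)^{i+1}a_ia_{2k+2-i} = (1+(-1)^{k+1})/2$. -/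
open Finset

theorem stmt6 (m n : ℕ) (hn : n = 2 * m + 1) (a : ℕ → ℤ)
    (ha : ∀ j ∈ Icc 1 n, a j = 1 ∨ a j = -1)
    (hskew : ∀ k ≤ n - 1, a (k + 1) * a (n - k) = (-1 : ℤ) ^ (m + k))
    (c : ℕ → ℤ) (hc : ∀ k, c k = ∑ i ∈ Icc 1 (n - k), a i * a (i + k))
    (hc2 : ∀ j, 1 ≤ j → j ≤ m → c (2 * j) = (-1 : ℤ) ^ m) :
    ∀ k ≤ m - 1, ∑ i ∈ Icc 1 k, (-1 : ℤ) ^ (i + 1) * (a i * a (2 * k + 2 - i)) =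
      (1 + (-1 : ℤ) ^ (k + 1)) / 2 := by
  intro k hk
  rcases Nat.eq_zero_or_pos k with rfl | hk1
  · norm_num
  have hkm : k + 1 ≤ m := by omega
  have hsq : ∀ i, 1 ≤ i → i ≤ n → a i * a i = 1 := by
    intro i h1 h2
    rcases ha i (mem_Icc.mpr ⟨h1, h2⟩) with h | h <;> rw [h] <;> ring
  -- Step 1: transform the goal sum
  have hS : ∑ i ∈ Icc 1 k, (-1:ℤ)^(i+1) * (a i * a (2*k+2-i)) =
      (-1:ℤ)^m * ∑ i ∈ Icc 1 k, a i * a (i + 2*(m-k)) := by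
    rw [mul_sum]
    refine sum_congr rfl ?_
    intro i hi
    rw [mem_Icc] at hi
    have h1 := hskew (2*k+1-i) (by omega)
    rw [show 2*k+1-i+1 = 2*k+2-i from by omega,
        show n - (2*k+1-i) = i + 2*(m-k) from by omega] at h1
    have hexp : ((-1:ℤ))^(m + (2*k+1-i)) = (-1)^m * (-1)^(i+1) := by
      rw [show m + (2*k+1-i) = m + (i+1) + 2*(k-i) from by omega]
      rw [pow_add, pow_add, pow_mul]
      norm_num
    rw [hexp] at h1
    have hs : a (i + 2*(m-k)) * a (i + 2*(m-k)) = 1 := hsq _ (by omega) (by omega)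
    have hv : a (2*k+2-i) = (-1)^m * (-1)^(i+1) * a (i + 2*(m-k)) := by
      linear_combination a (i + 2*(m-k)) * h1 - a (2*k+2-i) * hs
    have hpow : ((-1:ℤ))^(i+1) * (-1)^(i+1) = 1 := by
      rw [← pow_add]; exact Even.neg_one_pow ⟨i+1, rfl⟩
    rw [hv]
    linear_combination ((-1:ℤ)^m * (a i * a (i + 2*(m-k)))) * hpow
  -- middle term
  have hmid : a (k+1) * a (k+1 + 2*(m-k)) = (-1:ℤ)^(m+k) := by
    have h := hskew k (by omega)
    rwa [show n - k = k+1 + 2*(m-k) from by omega] at h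
  -- reflection of terms
  have hrefl : ∀ i ∈ Ioc (k+1) (2*k+1),
      a i * a (i + 2*(m-k)) = a (2*k+2-i) * a (2*k+2-i + 2*(m-k)) := by
    intro i hi
    rw [mem_Ioc] at hi
    have h2 := hskew (i-1) (by omega)
    rw [show i-1+1 = i from by omega,
        show n - (i-1) = 2*k+2-i + 2*(m-k) from by omega] at h2
    have h3 := hskew (i + 2*(m-k) - 1) (by omega)
    rw [show i + 2*(m-k) - 1 + 1 = i + 2*(m-k) from by omega,
        show n - (i + 2*(m-k) - 1) = 2*k+2-i from by omega] at h3
    have hexp3 : ((-1:ℤ))^(m + (i + 2*(m-k) - 1)) = (-1)^(m + (i-1)) := by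
      rw [show m + (i + 2*(m-k) - 1) = m + (i-1) + 2*(m-k) from by omega]
      rw [pow_add, pow_mul]; norm_num
    rw [hexp3] at h3
    have hsu : a i * a i = 1 := hsq _ (by omega) (by omega)
    have hsU : a (i + 2*(m-k)) * a (i + 2*(m-k)) = 1 := hsq _ (by omega) (by omega)
    have he2 : ((-1:ℤ))^(m + (i-1)) * (-1)^(m + (i-1)) = 1 := by
      rw [← pow_add]; exact Even.neg_one_pow ⟨m + (i-1), rfl⟩
    have hv2 : a (2*k+2-i + 2*(m-k)) = (-1)^(m + (i-1)) * a i := by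
      linear_combination a i * h2 - a (2*k+2-i + 2*(m-k)) * hsu
    have hv3 : a (2*k+2-i) = (-1)^(m + (i-1)) * a (i + 2*(m-k)) := by
      linear_combination a (i + 2*(m-k)) * h3 - a (2*k+2-i) * hsU
    rw [hv2, hv3]
    linear_combination (-(a i * a (i + 2*(m-k)))) * he2
  -- the correlation identity
  have hceq : ((-1:ℤ))^m = ∑ i ∈ Icc 1 (2*k+1), a i * a (i + 2*(m-k)) := by
    rw [← hc2 (m-k) (by omega) (by omega), hc]
    rw [show n - 2*(m-k) = 2*k+1 from by omega]
  -- sum splitting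
  have hIcc : ∀ x : ℕ, Icc 1 x = Ioc 0 x := by
    intro x; ext y; simp; omega
  have e1 : (∑ i ∈ Ioc 0 k, a i * a (i + 2*(m-k))) +
      ∑ i ∈ Ioc k (2*k+1), a i * a (i + 2*(m-k)) =
      ∑ i ∈ Ioc 0 (2*k+1), a i * a (i + 2*(m-k)) :=
    sum_Ioc_consecutive _ (by omega) (by omega)
  have e2 : (∑ i ∈ Ioc k (k+1), a i * a (i + 2*(m-k))) +
      ∑ i ∈ Ioc (k+1) (2*k+1), a i * a (i + 2*(m-k)) =
      ∑ i ∈ Ioc k (2*k+1), a i * a (i + 2*(m-k)) :=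
    sum_Ioc_consecutive _ (by omega) (by omega)
  have e3 : ∑ i ∈ Ioc k (k+1), a i * a (i + 2*(m-k)) = a (k+1) * a (k+1 + 2*(m-k)) := by
    rw [show Ioc k (k+1) = {k+1} from by ext y; simp only [mem_Ioc, mem_singleton]; omega, sum_singleton]
  have e4 : ∑ i ∈ Ioc (k+1) (2*k+1), a i * a (i + 2*(m-k)) =
      ∑ i ∈ Ioc 0 k, a i * a (i + 2*(m-k)) := by
    rw [sum_congr rfl hrefl]
    refine sum_nbij' (fun i => 2*k+2-i) (fun i => 2*k+2-i) ?_ ?_ ?_ ?_ ?_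
    · intro i hi; simp only [mem_Ioc] at hi ⊢; omega
    · intro i hi; simp only [mem_Ioc] at hi ⊢; omega
    · intro i hi; simp only [mem_Ioc] at hi
      show 2*k+2-(2*k+2-i) = i; omega
    · intro i hi; simp only [mem_Ioc] at hi
      show 2*k+2-(2*k+2-i) = i; omega
    · intro i hi; rfl
  have key : (-1:ℤ)^m = (∑ i ∈ Ioc 0 k, a i * a (i + 2*(m-k))) + (-1)^(m+k) +
      ∑ i ∈ Ioc 0 k, a i * a (i + 2*(m-k)) := by
    rw [hceq, hIcc, ← e1, ← e2, e3, e4, hmid]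
    ring
  rw [hS, hIcc k]
  set T := ∑ i ∈ Ioc 0 k, a i * a (i + 2*(m-k)) with hT
  rcases Nat.even_or_odd k with he | ho
  · have h1 : ((-1:ℤ))^(m+k) = (-1)^m := by
      rw [pow_add, he.neg_one_pow, mul_one]
    have h2 : ((-1:ℤ))^(k+1) = -1 := by
      rw [pow_add, he.neg_one_pow, pow_one, one_mul]
    rw [h1] at key
    have hT0 : T = 0 := by linarith
    rw [hT0, h2]; norm_num
  · have h1 : ((-1:ℤ))^(m+k) = -(-1)^m := by
      rw [pow_add, ho.neg_one_pow, mul_neg_one]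
    have h2 : ((-1:ℤ))^(k+1) = 1 := by
      rw [pow_add, ho.neg_one_pow, pow_one]; ring
    rw [h1] at key
    have hT1 : T = (-1:ℤ)^m := by linarith
    have hq : ((-1:ℤ))^m * (-1)^m = 1 := by
      rw [← pow_add]; exact Even.neg_one_pow ⟨m, rfl⟩
    rw [hT1, h2, hq]; norm_num
end

section
/- Let $a_1,a_2,\ldots\in\{-1,1\}$ satisfy, for each $k=0,\ldots,m-1$, $\sum_{i=1}^{k}(-1)^{i+1}a_ia_{2k+2-i} = (1+(-1)^{k+1})/2$. Then $\prod_{i=1}^{2k+1} a_i = a_{k+1}$ for $k=0,1,\ldots,m-1$. -/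
/-!
Each summand $c_i = (-1)^{i+1} a_i a_{2k+2-i}$ is $\pm 1$, and a sum of $k$ signs equal to
$k \bmod 2$ has exactly $\lfloor k/2 \rfloor$ minus signs, so $\prod c_i = (-1)^{\lfloor k/2 \rfloor}$.
The factors $(-1)^{i+1}$ alone contribute the same sign, hence
$\prod_{i=1}^{k} a_i a_{2k+2-i} = 1$, and this product is
$\prod_{i=1}^{2k+1} a_i$ with the middle factor $a_{k+1}$ removed.
-/

open Finset

theorem prod_Icc_two_mul_add_one_eq_prod_pairs_mul_middle {M : Type*} [CommMonoid M] (f : ℕ → M) (k : ℕ) :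
    ∏ i ∈ Icc 1 (2 * k + 1), f i = (∏ i ∈ Icc 1 k, f i * f (2 * k + 2 - i)) * f (k + 1) := by
  have hreflect :
      ∏ i ∈ Ico 1 (k + 1), f (2 * k + 2 - i) = ∏ i ∈ Ico (k + 1 + 1) (2 * k + 1 + 1), f i := by
    rw [prod_Ico_reflect f 1 (by omega)]
    congr 2
    omega
  rw [← Ico_add_one_right_eq_Icc, ← Ico_add_one_right_eq_Icc, prod_mul_distrib, hreflect,
    ← prod_Ico_consecutive f (show 1 ≤ k + 1 by omega) (show k + 1 ≤ 2 * k + 1 + 1 by omega),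
    prod_eq_prod_Ico_succ_bot (show k + 1 < 2 * k + 1 + 1 by omega)]
  exact (mul_left_comm _ _ _).trans (mul_comm _ _)

theorem prod_Icc_neg_one_pow_add_one {R : Type*} [CommMonoid R] [HasDistribNeg R] (k : ℕ) :
    ∏ i ∈ Icc 1 k, (-1 : R) ^ (i + 1) = (-1) ^ (k / 2) := by
  induction k with
  | zero => simp
  | succ k ih =>
    rw [prod_Icc_succ_top (by omega), ih, ← pow_add]
    obtain ⟨q, rfl | rfl⟩ := Nat.even_or_odd' k <;>
      exact neg_one_pow_congr (by simp only [Nat.even_iff]; omega)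

theorem Int.prod_eq_neg_one_pow_of_sum_eq {ι : Type*} {s : Finset ι} {c : ι → ℤ}
    (hc : ∀ i ∈ s, c i = 1 ∨ c i = -1) {t : ℕ} (h : ∑ i ∈ s, c i = #s - 2 * t) :
    ∏ i ∈ s, c i = (-1) ^ t := by
  classical
  set N := s.filter (c · = -1)
  have hone : ∀ i ∈ s.filter (¬ c · = -1), c i = 1 := fun i hi ↦
    (hc i (mem_filter.1 hi).1).resolve_right (mem_filter.1 hi).2
  have hprod : ∏ i ∈ s, c i = (-1) ^ #N := by
    rw [← prod_filter_mul_prod_filter_not s (c · = -1), prod_eq_one hone, mul_one,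
      prod_congr rfl fun i hi ↦ (mem_filter.1 hi).2, prod_const]
  have hsum : ∑ i ∈ s, c i = #s - 2 * #N := by
    rw [← sum_filter_add_sum_filter_not s (c · = -1), sum_congr rfl hone,
      sum_congr rfl fun i hi ↦ (mem_filter.1 hi).2, sum_const, sum_const,
      ← card_filter_add_card_filter_not (s := s) (c · = -1)]
    simp only [nsmul_eq_mul, mul_one, mul_neg]
    push_cast
    ring
  rw [hprod, show #N = t by omega]

theorem stmt7 (m : ℕ) (a : ℕ → ℤ)
    (ha : ∀ j, a j = 1 ∨ a j = -1)
    (hsum : ∀ k ≤ m - 1, ∑ i ∈ Icc 1 k, (-1 : ℤ) ^ (i + 1) * (a i * a (2 * k + 2 - i)) =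
      (1 + (-1 : ℤ) ^ (k + 1)) / 2) :
    ∀ k ≤ m - 1, ∏ i ∈ Icc 1 (2 * k + 1), a i = a (k + 1) := by
  intro k hk
  have hpm : ∀ i ∈ Icc 1 k, (-1 : ℤ) ^ (i + 1) * (a i * a (2 * k + 2 - i)) = 1 ∨
      (-1 : ℤ) ^ (i + 1) * (a i * a (2 * k + 2 - i)) = -1 := fun i _ ↦
    Int.isUnit_iff.1 <| (isUnit_neg_one.pow _).mul <|
      (Int.isUnit_iff.2 (ha i)).mul (Int.isUnit_iff.2 (ha _))
  have hparity : (1 + (-1 : ℤ) ^ (k + 1)) / 2 = #(Icc 1 k) - 2 * (k / 2 : ℕ) := by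
    rw [Nat.card_Icc, Nat.add_sub_cancel]
    obtain ⟨q, rfl | rfl⟩ := Nat.even_or_odd' k
    · rw [Odd.neg_one_pow ⟨q, rfl⟩]
      omega
    · rw [Even.neg_one_pow ⟨q + 1, by ring⟩]
      omega
  have hsigned := Int.prod_eq_neg_one_pow_of_sum_eq hpm ((hsum k hk).trans hparity)
  rw [prod_mul_distrib, prod_Icc_neg_one_pow_add_one] at hsigned
  have hpairs : ∏ i ∈ Icc 1 k, a i * a (2 * k + 2 - i) = 1 :=
    (mul_eq_left₀ (pow_ne_zero _ (by norm_num))).1 hsigned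
  rw [prod_Icc_two_mul_add_one_eq_prod_pairs_mul_middle, hpairs, one_mul]
end

section
/- Let $Q(z)=(2m+1)z^{2m}+(-1)^m\sum_{j=1}^m(z^{2m-2j}+z^{2m+2j})$ and write $Q(z)=(-1)^m\prod_{j=1}^{2m}(z-\alpha_j)(z+\alpha_j)$ where $P(z)=\prod_{j=1}^{2m}(z-\alpha_j)$ is monic with $Q(z)=(-1)^mP(z)P(-z)$. Let $S_\mu=\sum_{j=1}^{2m}(\alpha_j^\mu+(-\alpha_j)^\mu)$. Then $S_2=S_4=\cdots=S_{2m-2}=-2$. -/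
/-! The $4m$ numbers $\pm\alpha_j$ are the roots of the monic polynomial $(-1)^m Q$, whose top
$2m$ coefficients are $1, 0, 1, 0, \dots$, so their elementary symmetric functions are
$e_i = [i \text{ even}]$ for $i < 2m$. In Newton's identity
$p_{2k} = -2k\,e_{2k} - \sum_{0<i<2k} (-1)^i e_i\,p_{2k-i}$ only the $k-1$ even $i$ contribute,
so by strong induction $p_{2k} = -2k + 2(k-1) = -2$. -/

open Finset Polynomial

section NewtonIdentities

variable {ι R : Type*} [Fintype ι] [CommRing R]

theorem Fintype.sum_pow_eq_esymm_sub_sum (x : ι → R) {k : ℕ} (hk : 0 < k) :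
    ∑ i, x i ^ k = (-1) ^ (k + 1) * k * (univ.val.map x).esymm k -
      ∑ a ∈ antidiagonal k with a.1 ∈ Set.Ioo 0 k,
        (-1) ^ a.1 * (univ.val.map x).esymm a.1 * ∑ i, x i ^ a.2 := by
  simpa only [map_sub, map_mul, map_sum, map_pow, map_neg, map_one, map_natCast,
    MvPolynomial.aeval_esymm_eq_multiset_esymm, MvPolynomial.psum, MvPolynomial.aeval_X] using
    congrArg (MvPolynomial.aeval x) (MvPolynomial.psum_eq_mul_esymm_sub_sum ι R k hk)

theorem sum_antidiagonal_two_mul_eq_sum_Icc (f : ℕ × ℕ → R) (k : ℕ)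
    (hodd : ∀ a ∈ antidiagonal (2 * k), ¬Even a.1 → f a = 0) :
    ∑ a ∈ antidiagonal (2 * k) with a.1 ∈ Set.Ioo 0 (2 * k), f a =
      ∑ t ∈ Icc 1 (k - 1), f (2 * t, 2 * k - 2 * t) := by
  have hinj : Set.InjOn (fun t => (2 * t, 2 * k - 2 * t)) (Icc 1 (k - 1)) := by
    intro a _ b _ h
    have := congrArg Prod.fst h
    simp only at this
    omega
  rw [← sum_image hinj]
  refine (sum_subset ?_ ?_).symm
  · intro a ha
    simp only [mem_image, mem_Icc] at ha
    obtain ⟨t, ht, rfl⟩ := ha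
    simp only [mem_filter, HasAntidiagonal.mem_antidiagonal, Set.mem_Ioo]
    omega
  · intro a ha hnot
    simp only [mem_filter, HasAntidiagonal.mem_antidiagonal, Set.mem_Ioo] at ha
    refine hodd a (HasAntidiagonal.mem_antidiagonal.2 ha.1) fun ⟨t, ht⟩ => hnot ?_
    simp only [mem_image, mem_Icc]
    exact ⟨t, by omega, Prod.ext (by simp only; omega) (by simp only; omega)⟩

theorem Fintype.sum_pow_two_mul_eq_neg_two (x : ι → R) {N : ℕ}
    (he : ∀ i < N, (univ.val.map x).esymm i = if Even i then 1 else 0) :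
    ∀ k, 1 ≤ k → 2 * k < N → ∑ i, x i ^ (2 * k) = -2 := by
  intro k
  induction k using Nat.strong_induction_on with
  | _ k ih =>
    intro hk hkN
    have hterm : ∀ t ∈ Icc 1 (k - 1),
        (-1) ^ (2 * t) * (univ.val.map x).esymm (2 * t) * ∑ i, x i ^ (2 * k - 2 * t) = -2 := by
      intro t ht
      rw [mem_Icc] at ht
      rw [he _ (by omega), if_pos (even_two_mul t), show 2 * k - 2 * t = 2 * (k - t) by omega,
        ih (k - t) (by omega) (by omega) (by omega), (even_two_mul t).neg_one_pow]
      ring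
    have hsum := sum_antidiagonal_two_mul_eq_sum_Icc
      (fun a => (-1) ^ a.1 * (univ.val.map x).esymm a.1 * ∑ i, x i ^ a.2) k fun a ha hodd => by
        rw [he a.1 (by rw [HasAntidiagonal.mem_antidiagonal] at ha; omega), if_neg hodd]
        ring
    dsimp only at hsum
    rw [Fintype.sum_pow_eq_esymm_sub_sum x (by omega), hsum, Finset.sum_congr rfl hterm, sum_const,
      Nat.card_Icc, Nat.add_sub_cancel, nsmul_eq_mul, he _ hkN, if_pos (even_two_mul k),
      (odd_two_mul_add_one k).neg_one_pow, Nat.cast_pred hk]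
    push_cast
    ring

end NewtonIdentities

section Vieta

variable {ι R : Type*} [Fintype ι] [CommRing R]

theorem Fintype.esymm_eq_neg_one_pow_mul_coeff_prod (x : ι → R) {i : ℕ}
    (hi : i ≤ Fintype.card ι) :
    (univ.val.map x).esymm i = (-1) ^ i * (∏ j, (X - C (x j))).coeff (Fintype.card ι - i) := by
  have h := Multiset.prod_X_sub_C_coeff (univ.val.map x) (k := Fintype.card ι - i) (by simp)
  rw [Multiset.map_map, Multiset.card_map, card_val, card_univ, Nat.sub_sub_self hi] at h
  simp only [Function.comp_def] at h
  rw [prod_eq_multiset_prod, h, ← mul_assoc, ← pow_add, Even.neg_one_pow ⟨i, rfl⟩, one_mul]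

theorem prod_X_sub_C_comp_neg_X (x : ι → R) :
    (∏ j, (X - C (x j))).comp (-X) = (-1) ^ Fintype.card ι * ∏ j, (X + C (x j)) := by
  rw [Polynomial.prod_comp, ← card_univ, ← prod_const, ← prod_mul_distrib]
  exact prod_congr rfl fun j _ => by simp only [sub_comp, X_comp, C_comp]; ring

theorem prod_X_sub_C_sum_elim_neg (x : ι → R) :
    ∏ i : ι ⊕ ι, (X - C (Sum.elim x (-x) i)) =
      (-1) ^ Fintype.card ι * ((∏ j, (X - C (x j))) * (∏ j, (X - C (x j))).comp (-X)) := by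
  rw [prod_X_sub_C_comp_neg_X, mul_left_comm _ ((-1) ^ _), ← mul_assoc, ← pow_add,
    Even.neg_one_pow ⟨_, rfl⟩, one_mul, Fintype.prod_sum_type]
  simp only [Sum.elim_inl, Sum.elim_inr, Pi.neg_apply, map_neg, sub_neg_eq_add]

theorem Fintype.esymm_eq_ite_even_of_coeff (x : ι → R) {N : ℕ} (hN : N ≤ Fintype.card ι)
    (hcoeff : ∀ i < N,
      (∏ j, (X - C (x j))).coeff (Fintype.card ι - i) = if Even i then 1 else 0) :
    ∀ i < N, (univ.val.map x).esymm i = if Even i then 1 else 0 := by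
  intro i hi
  rw [esymm_eq_neg_one_pow_mul_coeff_prod x (by omega), hcoeff i hi]
  split_ifs with heven
  · rw [heven.neg_one_pow, mul_one]
  · rw [mul_zero]

theorem coeff_C_mul_X_pow_add_C_mul_sum_sub (m i : ℕ) (a b : R) (hi : i < 2 * m) :
    (C a * X ^ (2 * m) + C b * ∑ j ∈ Icc 1 m, (X ^ (2 * m - 2 * j) + X ^ (2 * m + 2 * j))).coeff
      (4 * m - i) = b * if Even i then 1 else 0 := by
  simp only [coeff_add, coeff_C_mul, coeff_X_pow, finsetSum_coeff,
    if_neg (by omega : 4 * m - i ≠ 2 * m), mul_zero, zero_add]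
  congr 1
  split_ifs with hn
  · obtain ⟨t, rfl⟩ := hn
    rw [sum_eq_single (m - t)]
    · rw [if_neg (by omega), if_pos (by omega), zero_add]
    · intro j hj hne
      rw [mem_Icc] at hj
      rw [if_neg (by omega), if_neg (by omega), add_zero]
    · exact fun h => absurd (mem_Icc.2 (by omega)) h
  · refine sum_eq_zero fun j hj => ?_
    rw [if_neg (by omega), if_neg fun h => hn ⟨m - j, by omega⟩, add_zero]

end Vieta

theorem stmt10_general (m : ℕ) (α : Fin (2 * m) → ℂ)
    (hfact : C ((-1 : ℂ) ^ m) * ((∏ j, (X - C (α j))) * (∏ j, (X - C (α j))).comp (-X)) =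
      C ((2 * m + 1 : ℂ)) * X ^ (2 * m) +
        C ((-1 : ℂ) ^ m) * ∑ j ∈ Icc 1 m, (X ^ (2 * m - 2 * j) + X ^ (2 * m + 2 * j)))
    (S : ℕ → ℂ) (hS : ∀ μ, S μ = ∑ j, ((α j) ^ μ + (-(α j)) ^ μ)) :
    ∀ k, 1 ≤ k → k ≤ m - 1 → S (2 * k) = -2 := by
  set γ := Sum.elim α (-α)
  have hsign : ((-1 : ℂ) ^ m) * (-1) ^ m = 1 := by rw [← pow_add, Even.neg_one_pow ⟨m, rfl⟩]
  have hprod : ∏ i, (X - C (γ i)) = C ((-1 : ℂ) ^ m) * (C ((2 * m + 1 : ℂ)) * X ^ (2 * m) +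
      C ((-1 : ℂ) ^ m) * ∑ j ∈ Icc 1 m, (X ^ (2 * m - 2 * j) + X ^ (2 * m + 2 * j))) := by
    rw [prod_X_sub_C_sum_elim_neg, Fintype.card_fin, Even.neg_one_pow (even_two_mul m), one_mul,
      ← hfact, ← mul_assoc, ← C_mul, hsign, C_1, one_mul]
  have hcard : Fintype.card (Fin (2 * m) ⊕ Fin (2 * m)) = 4 * m := by
    rw [Fintype.card_sum, Fintype.card_fin]; ring
  have hesymm := Fintype.esymm_eq_ite_even_of_coeff γ (N := 2 * m) (by omega) fun i hi => by
    rw [hcard, hprod, coeff_C_mul, coeff_C_mul_X_pow_add_C_mul_sum_sub m i _ _ hi, ← mul_assoc,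
      hsign, one_mul]
  intro k hk hkm
  have hpow : S (2 * k) = ∑ i, γ i ^ (2 * k) := by
    rw [hS, Fintype.sum_sum_type, sum_add_distrib]
    rfl
  rw [hpow]
  exact Fintype.sum_pow_two_mul_eq_neg_two γ hesymm k hk (by omega)

theorem stmt10 (m : ℕ) (hm : 2 ≤ m) (α : Fin (2 * m) → ℂ)
    (hfact : C ((-1 : ℂ) ^ m) * ((∏ j, (X - C (α j))) * (∏ j, (X - C (α j))).comp (-X)) =
      C ((2 * m + 1 : ℂ)) * X ^ (2 * m) +
        C ((-1 : ℂ) ^ m) * ∑ j ∈ Icc 1 m, (X ^ (2 * m - 2 * j) + X ^ (2 * m + 2 * j)))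
    (S : ℕ → ℂ) (hS : ∀ μ, S μ = ∑ j, ((α j) ^ μ + (-(α j)) ^ μ)) :
    ∀ k, 1 ≤ k → k ≤ m - 1 → S (2 * k) = -2 :=
  stmt10_general m α hfact S hS
end

section
/- Let $P(z)=\prod_{j=1}^{2m}(z-\alpha_j)$ be a monic polynomial such that $(-1)^mP(z)P(-z)=(2m+1)z^{2m}+(-1)^m\sum_{j=1}^m(z^{2m-2j}+z^{2m+2j})$. Then the power sums $s_{2k}=\sum_{j=1}^{2m}\alpha_j^{2k}$ satisfy $s_{2k}=-1$ for $k=1,2,\ldots,m-1$. -/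
/-!
Since `(z - a)(-z - a) = -(z² - a²)`, we have `P(z)P(-z) = Q(z²)` with `Q = ∏ (X - αⱼ²)`.
Comparing the coefficients of `z^(2m + 2j)` in the hypothesis shows that `Q` has coefficient `1`
in degree `2m - i` for `1 ≤ i ≤ m - 1`, i.e. `eᵢ(α²) = (-1)^i` by Vieta. Newton's identities
then give inductively `pₖ(α²) = -k + (k - 1) = -1`, and `pₖ(α²) = s_{2k}`.
-/

open Finset Polynomial

theorem card_filter_antidiagonal_fst_mem_Ioo (k : ℕ) :
    #{a ∈ antidiagonal k | a.1 ∈ Set.Ioo 0 k} = k - 1 := by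
  rw [Nat.antidiagonal_eq_map, filter_map, card_map]
  refine (congrArg card ?_).trans (Nat.card_Ioo 0 k)
  ext i
  simp only [mem_filter, mem_range, mem_Ioo, Set.mem_Ioo, Function.comp_apply]
  exact ⟨fun h => h.2, fun h => ⟨by omega, h⟩⟩

section Newton

variable {ι R : Type*} [Fintype ι] [CommRing R]

theorem sum_pow_eq_mul_esymm_sub_sum (β : ι → R) {k : ℕ} (hk : 0 < k) :
    ∑ j, β j ^ k = (-1) ^ (k + 1) * k * (univ.val.map β).esymm k -
      ∑ a ∈ antidiagonal k with a.1 ∈ Set.Ioo 0 k,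
        (-1) ^ a.1 * (univ.val.map β).esymm a.1 * ∑ j, β j ^ a.2 := by
  simpa only [map_sub, map_mul, map_sum, map_pow, map_neg, map_one, map_natCast,
    MvPolynomial.aeval_esymm_eq_multiset_esymm, MvPolynomial.psum, MvPolynomial.aeval_X] using
    congrArg (MvPolynomial.aeval β) (MvPolynomial.psum_eq_mul_esymm_sub_sum ι R k hk)

theorem sum_pow_eq_neg_one_of_esymm_eq_neg_one_pow (β : ι → R) {N : ℕ}
    (he : ∀ i, 1 ≤ i → i ≤ N → (univ.val.map β).esymm i = (-1) ^ i) :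
    ∀ k, 1 ≤ k → k ≤ N → ∑ j, β j ^ k = -1 := by
  intro k
  induction k using Nat.strong_induction_on with
  | _ k ih =>
    intro hk hkN
    have hterm : ∀ a ∈ {a ∈ antidiagonal k | a.1 ∈ Set.Ioo 0 k},
        (-1) ^ a.1 * (univ.val.map β).esymm a.1 * ∑ j, β j ^ a.2 = (-1 : R) := by
      intro a ha
      simp only [mem_filter, HasAntidiagonal.mem_antidiagonal, Set.mem_Ioo] at ha
      rw [he a.1 (by omega) (by omega), ih a.2 (by omega) (by omega) (by omega), ← pow_add,
        Even.neg_one_pow ⟨a.1, rfl⟩, one_mul]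
    rw [sum_pow_eq_mul_esymm_sub_sum β hk, he k hk hkN, sum_congr rfl hterm, sum_const,
      card_filter_antidiagonal_fst_mem_Ioo, nsmul_eq_mul, Nat.cast_sub hk]
    have hsign : ((-1 : R)) ^ (k + 1) * (-1) ^ k = -1 := by
      rw [← pow_add, Odd.neg_one_pow ⟨k, by ring⟩]
    linear_combination (k : R) * hsign

end Newton

section Vieta

variable {ι R : Type*} [CommRing R]

theorem prod_X_sub_C_mul_comp_neg_X (s : Finset ι) (a : ι → R) :
    (∏ j ∈ s, (X - C (a j))) * (∏ j ∈ s, (X - C (a j))).comp (-X) =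
      (-1) ^ #s * expand R 2 (∏ j ∈ s, (X - C (a j ^ 2))) := by
  rw [Polynomial.prod_comp, ← prod_mul_distrib, map_prod, ← prod_const, ← prod_mul_distrib]
  refine prod_congr rfl fun j _ => ?_
  simp only [sub_comp, X_comp, C_comp, map_sub, expand_X, expand_C, map_pow]
  ring

theorem Finset.prod_X_sub_C_coeff_card_sub (s : Finset ι) (r : ι → R) {k : ℕ} (h : k ≤ #s) :
    (∏ i ∈ s, (X - C (r i))).coeff (#s - k) = (-1) ^ k * (s.val.map r).esymm k := by
  have := Multiset.prod_X_sub_C_coeff (s.val.map r) (k := #s - k) (by simp)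
  rwa [Multiset.map_map, Multiset.card_map, card_val, Nat.sub_sub_self h] at this

theorem Finset.esymm_map_eq_neg_one_pow_of_coeff_prod_X_sub_C (s : Finset ι) (r : ι → R) {k : ℕ}
    (h : k ≤ #s) (hc : (∏ i ∈ s, (X - C (r i))).coeff (#s - k) = 1) :
    (s.val.map r).esymm k = (-1) ^ k := by
  rw [prod_X_sub_C_coeff_card_sub s r h] at hc
  linear_combination (-1 : R) ^ k * hc -
    (s.val.map r).esymm k * pow_mul_pow_eq_one k (by norm_num : (-1 : R) * -1 = 1)

end Vieta

theorem coeff_C_mul_X_pow_add_C_mul_sum_Icc {R : Type*} [CommRing R] (c d : R) {m j : ℕ}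
    (hj : 0 < j) (hjm : j ≤ m) :
    (C c * X ^ (2 * m) + C d * ∑ i ∈ Icc 1 m, (X ^ (2 * m - 2 * i) + X ^ (2 * m + 2 * i))).coeff
      (2 * m + 2 * j) = d := by
  simp only [coeff_add, coeff_C_mul, finsetSum_coeff, coeff_X_pow]
  rw [sum_eq_single_of_mem j (by simp; omega) fun i hi hij => by
    simp only [mem_Icc] at hi; rw [if_neg (by omega), if_neg (by omega)]; simp]
  simp [hj.ne', show 2 * m + 2 * j ≠ 2 * m - 2 * j by omega]

theorem stmt11_general (m : ℕ) (α : Fin (2 * m) → ℂ)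
    (hfact : C ((-1 : ℂ) ^ m) * ((∏ j, (X - C (α j))) * (∏ j, (X - C (α j))).comp (-X)) =
      C ((2 * m + 1 : ℂ)) * X ^ (2 * m) +
        C ((-1 : ℂ) ^ m) * ∑ j ∈ Icc 1 m, (X ^ (2 * m - 2 * j) + X ^ (2 * m + 2 * j)))
    (s : ℕ → ℂ) (hs : ∀ μ, s μ = ∑ j, (α j) ^ μ) :
    ∀ k, 1 ≤ k → k ≤ m - 1 → s (2 * k) = -1 := by
  have hQ : C ((-1 : ℂ) ^ m) * expand ℂ 2 (∏ j, (X - C (α j ^ 2))) =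
      C ((2 * m + 1 : ℂ)) * X ^ (2 * m) +
        C ((-1 : ℂ) ^ m) * ∑ j ∈ Icc 1 m, (X ^ (2 * m - 2 * j) + X ^ (2 * m + 2 * j)) := by
    rw [← hfact, prod_X_sub_C_mul_comp_neg_X, card_univ, Fintype.card_fin, pow_mul, neg_one_sq,
      one_pow, one_mul]
  have hesymm : ∀ i, 1 ≤ i → i ≤ m - 1 → (univ.val.map fun j => α j ^ 2).esymm i = (-1) ^ i := by
    intro i hi him
    refine esymm_map_eq_neg_one_pow_of_coeff_prod_X_sub_C _ _ (by simp; omega) ?_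
    have hcoeff := congrArg (coeff · (2 * m + 2 * (m - i))) hQ
    simp only [coeff_C_mul, coeff_C_mul_X_pow_add_C_mul_sum_Icc _ _ (by omega : 0 < m - i)
      (Nat.sub_le m i)] at hcoeff
    rw [show 2 * m + 2 * (m - i) = 2 * (#(univ : Finset (Fin (2 * m))) - i) by simp; omega,
      coeff_expand_mul' two_pos] at hcoeff
    exact mul_left_cancel₀ (pow_ne_zero m (neg_ne_zero.mpr one_ne_zero))
      (hcoeff.trans (mul_one _).symm)
  intro k hk hkm
  rw [hs, ← sum_pow_eq_neg_one_of_esymm_eq_neg_one_pow _ hesymm k hk hkm]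
  simp only [pow_mul]

theorem stmt11 (m : ℕ) (hm : 2 ≤ m) (α : Fin (2 * m) → ℂ)
    (hfact : C ((-1 : ℂ) ^ m) * ((∏ j, (X - C (α j))) * (∏ j, (X - C (α j))).comp (-X)) =
      C ((2 * m + 1 : ℂ)) * X ^ (2 * m) +
        C ((-1 : ℂ) ^ m) * ∑ j ∈ Icc 1 m, (X ^ (2 * m - 2 * j) + X ^ (2 * m + 2 * j)))
    (s : ℕ → ℂ) (hs : ∀ μ, s μ = ∑ j, (α j) ^ μ) :
    ∀ k, 1 ≤ k → k ≤ m - 1 → s (2 * k) = -1 :=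
  stmt11_general m α hfact s hs
end

section
/- Under the Barker hypotheses (with $n=2m+1$, $p\ge3$ the largest integer with $a_1=\cdots=a_p=1$, $a_{p+1}=-1$, and $s_{2k}=-1$ for $1\le k\le m-1$, $s_1=-1$, and relation (4) $a_ka_{k+1}=a_{2k}a_{2k+1}$), the power sums satisfy $s_\mu\equiv -1\pmod p$ for all $\mu=1,2,\ldots,2m-1-p$. -/
/-!
Newton's identities at two consecutive indices combine, using `a 1 = 1`, into
`∑_{i<n} (a_{i+2} - a_{i+1}) (s_{n-i} + 1) = (n+1) (a_{n+1} - a_{n+2}) - (s_{n+1} + 1)`.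
Argue by strong induction on `ν`. The even power sums are `-1`, and for odd `ν` the identity at
`n = ν - 1` gives `s_ν + 1 ≡ ν (a_ν - a_{ν+1}) (mod p)`, which settles `p ∣ ν` and `ν < p`.
Relation (4) at `k = p / 2` shows that `p` is odd. If `p < ν` and `p ∤ ν`, put `2t = ν + p`: the
same congruence at `t` forces `a_t = a_{t+1}`, so relation (4) gives `a_{ν+p} = a_{ν+p+1}` and
the identity at `n = ν + p - 1` has vanishing right side. Modulo `p` only its term at the sign
change `a_p = 1`, `a_{p+1} = -1` survives, so `2 (s_ν + 1) ≡ 0`.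
-/

open Finset Polynomial

theorem Polynomial.coeff_prod_X_sub_C_card_sub {R ι : Type*} [CommRing R] [Fintype ι]
    (α : ι → R) {i : ℕ} (hi : i ≤ Fintype.card ι) :
    (∏ j, (X - C (α j))).coeff (Fintype.card ι - i) = (-1) ^ i * (univ.val.map α).esymm i := by
  have hcard : Multiset.card (univ.val.map α) = Fintype.card ι := by simp
  have vieta := Multiset.prod_X_sub_C_coeff (univ.val.map α) (k := Fintype.card ι - i) (by omega)
  rwa [Multiset.map_map, hcard, Nat.sub_sub_self hi] at vieta

theorem Polynomial.sum_coeff_prod_X_sub_C_mul_psum {R ι : Type*} [CommRing R] [Fintype ι]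
    (α : ι → R) {k : ℕ} (hk : k ≤ Fintype.card ι) :
    ∑ i ∈ range k, (∏ j, (X - C (α j))).coeff (Fintype.card ι - i) * ∑ j, α j ^ (k - i) +
      k * (∏ j, (X - C (α j))).coeff (Fintype.card ι - k) = 0 := by
  have newton := congrArg (MvPolynomial.aeval α) (MvPolynomial.mul_esymm_eq_sum ι R k)
  simp only [map_mul, map_sum, map_pow, map_natCast, map_neg, map_one,
    MvPolynomial.aeval_esymm_eq_multiset_esymm, MvPolynomial.psum, MvPolynomial.aeval_X] at newton
  rw [sum_filter, Nat.sum_antidiagonal_eq_sum_range_succ_mk, sum_range_succ, if_neg k.lt_irrefl,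
    add_zero, sum_congr rfl fun i hi => if_pos (mem_range.mp hi)] at newton
  rw [coeff_prod_X_sub_C_card_sub α hk,
    sum_congr rfl fun i hi => by rw [coeff_prod_X_sub_C_card_sub α (by simp at hi; omega)]]
  rcases neg_one_pow_eq_or R k with h | h <;> rw [pow_succ, h] at newton <;> rw [h]
  · linear_combination newton
  · linear_combination -newton

theorem Polynomial.coeff_sum_C_mul_X_pow_sub {R : Type*} [Semiring R] (b : ℕ → R) {n i : ℕ}
    (hi : i ≤ n) : (∑ j ∈ Icc 1 (n + 1), C (b j) * X ^ (n + 1 - j)).coeff (n - i) = b (i + 1) := by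
  simp only [finsetSum_coeff, coeff_C_mul, coeff_X_pow]
  rw [sum_eq_single (i + 1) (fun j hj hne => by rw [if_neg (by simp at hj; omega), mul_zero])
    (fun h => absurd (by simp; omega) h), if_pos (by omega), mul_one]

/-- `a (i + 1)` is the coefficient of `X ^ (n - i)` of a monic polynomial of degree `n`, and `s j`
is the `j`-th power sum of its roots. -/
def NewtonIdentity {R : Type*} [CommRing R] (a s : ℕ → R) (k : ℕ) : Prop :=
  ∑ i ∈ range k, a (i + 1) * s (k - i) + k * a (k + 1) = 0

theorem newtonIdentity_of_eq_prod {R : Type*} [CommRing R] [CharZero R] {n : ℕ} {a s : ℕ → ℤ}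
    {α : Fin n → R}
    (hfact : ∑ j ∈ Icc 1 (n + 1), C (a j : R) * X ^ (n + 1 - j) = ∏ j, (X - C (α j)))
    (hs : ∀ j, (s j : R) = ∑ i, α i ^ j) {k : ℕ} (hk : k ≤ n) : NewtonIdentity a s k := by
  have newton := sum_coeff_prod_X_sub_C_mul_psum α (k := k) (by simpa using hk)
  rw [Fintype.card_fin, ← hfact, coeff_sum_C_mul_X_pow_sub _ hk,
    sum_congr rfl fun i hi => by
      rw [coeff_sum_C_mul_X_pow_sub _ (by simp at hi; omega), ← hs]] at newton
  unfold NewtonIdentity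
  exact_mod_cast newton

theorem NewtonIdentity.sum_sub_mul_add_one_eq {R : Type*} [CommRing R] {a s : ℕ → R}
    (ha1 : a 1 = 1) {n : ℕ} (hn : NewtonIdentity a s n) (hn1 : NewtonIdentity a s (n + 1)) :
    ∑ i ∈ range n, (a (i + 2) - a (i + 1)) * (s (n - i) + 1) =
      (n + 1) * (a (n + 1) - a (n + 2)) - (s (n + 1) + 1) := by
  unfold NewtonIdentity at hn hn1
  rw [sum_range_succ', ha1, one_mul] at hn1
  simp only [Nat.add_sub_add_right, Nat.sub_zero] at hn1
  have telescope := sum_range_sub (fun i => a (i + 1)) n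
  simp only [ha1] at telescope
  simp only [mul_add, sub_mul, mul_one, sum_add_distrib, sum_sub_distrib, telescope]
  push_cast at hn1
  linear_combination hn1 - hn

theorem Int.eq_of_dvd_mul_sub {p ν : ℕ} {x y : ℤ} (hp : Odd p) (hν : ¬ p ∣ ν)
    (hx : x = 1 ∨ x = -1) (hy : y = 1 ∨ y = -1) (h : (p : ℤ) ∣ ν * (x - y)) : x = y := by
  by_contra hne
  have h2 : (p : ℤ) ∣ ν * 2 := by
    rcases (by omega : x - y = 2 ∨ x - y = -2) with e | e <;> rw [e] at h
    · exact h
    · rwa [mul_neg, dvd_neg] at h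
  exact hν (hp.coprime_two_right.dvd_of_dvd_mul_right (by exact_mod_cast h2))

theorem Int.eq_of_mul_self_eq_mul {x y z : ℤ} (hx : x = 1 ∨ x = -1) (h : x * x = y * z) :
    y = z := by
  have hyz : y * z = 1 := by rcases hx with rfl | rfl <;> simpa using h.symm
  rcases Int.mul_eq_one_iff_eq_one_or_neg_one.mp hyz with ⟨rfl, rfl⟩ | ⟨rfl, rfl⟩ <;> rfl

namespace Barker

variable {p m : ℕ} {a s : ℕ → ℤ}

theorem odd_of_mul_succ_eq_mul (hp : 3 ≤ p) (hpm : p + 2 ≤ 2 * m)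
    (hones : ∀ j, 1 ≤ j → j ≤ p → a j = 1) (hp1 : a (p + 1) = -1)
    (hrel4 : ∀ k, 1 ≤ k → k ≤ m - 1 → a k * a (k + 1) = a (2 * k) * a (2 * k + 1)) : Odd p := by
  by_contra heven
  obtain ⟨k, hk⟩ := Nat.not_odd_iff_even.mp heven
  have h := hrel4 k (by omega) (by omega)
  rw [hones k (by omega) (by omega), hones (k + 1) (by omega) (by omega), show 2 * k = p by omega,
    hones p (by omega) le_rfl, hp1] at h
  norm_num at h

theorem dvd_succ_mul_sub_sub (ha1 : a 1 = 1) {n : ℕ} (hn : NewtonIdentity a s n)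
    (hn1 : NewtonIdentity a s (n + 1)) (hs : ∀ j, 1 ≤ j → j ≤ n → (p : ℤ) ∣ s j + 1) :
    (p : ℤ) ∣ (n + 1) * (a (n + 1) - a (n + 2)) - (s (n + 1) + 1) :=
  hn.sum_sub_mul_add_one_eq ha1 hn1 ▸
    dvd_sum fun i hi => (hs (n - i) (by simp at hi; omega) (by omega)).mul_left _

theorem eq_succ_of_dvd (hpodd : Odd p) (ha1 : a 1 = 1) {n : ℕ} (hn : NewtonIdentity a s n)
    (hn1 : NewtonIdentity a s (n + 1)) (hs : ∀ j, 1 ≤ j → j ≤ n + 1 → (p : ℤ) ∣ s j + 1)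
    (hndvd : ¬ p ∣ n + 1) (hx : a (n + 1) = 1 ∨ a (n + 1) = -1)
    (hy : a (n + 2) = 1 ∨ a (n + 2) = -1) : a (n + 1) = a (n + 2) := by
  have key := dvd_succ_mul_sub_sub ha1 hn hn1 fun j h1 h2 => hs j h1 (by omega)
  refine Int.eq_of_dvd_mul_sub hpodd hndvd hx hy ?_
  simpa using (dvd_sub_left (hs (n + 1) (by omega) le_rfl)).mp key

theorem dvd_add_one_of_odd_of_lt (hpodd : Odd p) (hp : 3 ≤ p)
    (hsign : ∀ j ∈ Icc 1 (2 * m + 1), a j = 1 ∨ a j = -1)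
    (hones : ∀ j, 1 ≤ j → j ≤ p → a j = 1) (hp1 : a (p + 1) = -1)
    (hN : ∀ k ≤ 2 * m, NewtonIdentity a s k) (hs2 : ∀ k, 1 ≤ k → k ≤ m - 1 → s (2 * k) = -1)
    (hrel4 : ∀ k, 1 ≤ k → k ≤ m - 1 → a k * a (k + 1) = a (2 * k) * a (2 * k + 1))
    {ν : ℕ} (hνodd : Odd ν) (hpν : p < ν) (hνdvd : ¬ p ∣ ν) (hνm : ν + p + 1 ≤ 2 * m)
    (ih : ∀ j, 1 ≤ j → j < ν → (p : ℤ) ∣ s j + 1) : (p : ℤ) ∣ s ν + 1 := by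
  have ha1 : a 1 = 1 := hones 1 le_rfl (by omega)
  have sign : ∀ j, 1 ≤ j → j ≤ 2 * m + 1 → a j = 1 ∨ a j = -1 :=
    fun j h1 h2 => hsign j (mem_Icc.mpr ⟨h1, h2⟩)
  obtain ⟨t, ht⟩ := hνodd.add_odd hpodd
  have hat : a t = a (t + 1) := by
    rcases le_or_gt (t + 1) p with h | h
    · rw [hones t (by omega) (by omega), hones (t + 1) (by omega) h]
    obtain ⟨n, rfl⟩ : ∃ n, t = n + 1 := ⟨t - 1, by omega⟩
    refine eq_succ_of_dvd hpodd ha1 (hN n (by omega)) (hN (n + 1) (by omega))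
      (fun j h1 h2 => ih j h1 (by omega)) (fun hd => hνdvd ?_) (sign _ (by omega) (by omega))
      (sign _ (by omega) (by omega))
    exact (Nat.dvd_add_left dvd_rfl).mp (ht ▸ dvd_add hd hd)
  have hend : a (ν + p) = a (ν + p + 1) := by
    have h := hrel4 t (by omega) (by omega)
    rw [← hat, show 2 * t = ν + p by omega] at h
    exact Int.eq_of_mul_self_eq_mul (sign t (by omega) (by omega)) h
  obtain ⟨n, hn⟩ : ∃ n, ν + p = n + 1 := ⟨ν + p - 1, by omega⟩
  have hsum := (hN n (by omega)).sum_sub_mul_add_one_eq ha1 (hN (n + 1) (by omega))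
  rw [← hn, show n + 2 = ν + p + 1 by omega, ← hend, show ν + p = 2 * t by omega,
    hs2 t (by omega) (by omega), sub_self, mul_zero, neg_add_cancel, sub_zero,
    ← add_sum_erase _ _ (mem_range.mpr (by omega : p - 1 < n)),
    show p - 1 + 2 = p + 1 by omega, show p - 1 + 1 = p by omega, show n - (p - 1) = ν by omega,
    hp1, hones p (by omega) le_rfl] at hsum
  have hrest :
      (p : ℤ) ∣ ∑ i ∈ (range n).erase (p - 1), (a (i + 2) - a (i + 1)) * (s (n - i) + 1) := by
    refine dvd_sum fun i hi => ?_
    obtain ⟨hip, hin⟩ := mem_erase.mp hi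
    rw [mem_range] at hin
    rcases lt_or_gt_of_ne hip with h | h
    · simp [hones (i + 2) (by omega) (by omega), hones (i + 1) (by omega) (by omega)]
    · exact (ih (n - i) (by omega) (by omega)).mul_left _
  have h2 : (p : ℤ) ∣ 2 * (s ν + 1) := by
    convert hrest using 1
    linear_combination -hsum
  exact (Nat.isCoprime_iff_coprime.mpr hpodd.coprime_two_right).dvd_of_dvd_mul_left h2

theorem dvd_add_one_of_forall_lt (hpodd : Odd p) (hp : 3 ≤ p)
    (hsign : ∀ j ∈ Icc 1 (2 * m + 1), a j = 1 ∨ a j = -1)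
    (hones : ∀ j, 1 ≤ j → j ≤ p → a j = 1) (hp1 : a (p + 1) = -1)
    (hN : ∀ k ≤ 2 * m, NewtonIdentity a s k) (hs1 : s 1 = -1)
    (hs2 : ∀ k, 1 ≤ k → k ≤ m - 1 → s (2 * k) = -1)
    (hrel4 : ∀ k, 1 ≤ k → k ≤ m - 1 → a k * a (k + 1) = a (2 * k) * a (2 * k + 1))
    {ν : ℕ} (hν : 1 ≤ ν) (hνm : ν + p + 1 ≤ 2 * m)
    (ih : ∀ j, 1 ≤ j → j < ν → (p : ℤ) ∣ s j + 1) : (p : ℤ) ∣ s ν + 1 := by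
  rcases Nat.even_or_odd ν with ⟨k, hk⟩ | hνodd
  · simp [hk, ← two_mul, hs2 k (by omega) (by omega)]
  obtain ⟨n, rfl⟩ : ∃ n, ν = n + 1 := ⟨ν - 1, by omega⟩
  rcases n.eq_zero_or_pos with rfl | hn
  · simp [hs1]
  have ha1 : a 1 = 1 := hones 1 le_rfl (by omega)
  have key := dvd_succ_mul_sub_sub ha1 (hN n (by omega)) (hN (n + 1) (by omega))
    fun j h1 h2 => ih j h1 (by omega)
  by_cases hνdvd : p ∣ n + 1
  · have hmul : (p : ℤ) ∣ (n + 1 : ℕ) * (a (n + 1) - a (n + 2)) :=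
      (Int.natCast_dvd_natCast.mpr hνdvd).mul_right _
    exact (dvd_sub_right hmul).mp (by exact_mod_cast key)
  rcases lt_or_gt_of_ne (fun h : n + 1 = p => hνdvd (h ▸ dvd_rfl)) with h | h
  · rw [hones (n + 1) (by omega) h.le, hones (n + 2) (by omega) h, sub_self, mul_zero,
      zero_sub, dvd_neg] at key
    exact key
  · exact dvd_add_one_of_odd_of_lt hpodd hp hsign hones hp1 hN hs2 hrel4 hνodd h hνdvd hνm ih

end Barker

theorem stmt14 (m p : ℕ) (hp : 3 ≤ p) (a : ℕ → ℤ)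
    (ha : ∀ j ∈ Icc 1 (2 * m + 1), a j = 1 ∨ a j = -1)
    (hones : ∀ j, 1 ≤ j → j ≤ p → a j = 1) (hp1 : a (p + 1) = -1)
    (α : Fin (2 * m) → ℂ)
    (hfact : (∑ j ∈ Icc 1 (2 * m + 1), C ((a j : ℂ)) * X ^ (2 * m + 1 - j)) =
      ∏ j, (X - C (α j)))
    (s : ℕ → ℤ) (hs : ∀ j, ((s j : ℂ)) = ∑ i, (α i) ^ j)
    (hs1 : s 1 = -1) (hs2 : ∀ k, 1 ≤ k → k ≤ m - 1 → s (2 * k) = -1)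
    (hrel4 : ∀ k, 1 ≤ k → k ≤ m - 1 → a k * a (k + 1) = a (2 * k) * a (2 * k + 1)) :
    ∀ μ, 1 ≤ μ → μ ≤ 2 * m - 1 - p → (p : ℤ) ∣ s μ + 1 := by
  intro μ hμ1 hμm
  have hpodd := Barker.odd_of_mul_succ_eq_mul hp (by omega) hones hp1 hrel4
  have hN : ∀ k ≤ 2 * m, NewtonIdentity a s k := fun k hk => newtonIdentity_of_eq_prod hfact hs hk
  induction μ using Nat.strong_induction_on with
  | _ ν ih =>
    exact Barker.dvd_add_one_of_forall_lt hpodd hp ha hones hp1 hN hs1 hs2 hrel4 hμ1 (by omega)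
      fun j hj hjν => ih j hjν hj (by omega)
end
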